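/- Let Q satisfy (Q1)–(Q3), and define R_M := (2MC_M/(C_α D^S_M))², where C_α < 0 and C_M > 0 are the constants from the splitting estimate. If (f_n) ⊂ F^S_M is a minimizing sequence for D, then for every R > R_M, lim_{n→∞} ∫_{|x|≥R} ∫ f_n dv dx = 0; i.e. along any minimizing sequence the mass concentrates in the disc of radius R_M. -/

import Mathlib

/-!
Let `ρ` be the spatial density of `f`, `b(r) = ∫_{|x|>r} ρ` its mass outside radius `r`,
`ε = D(f) - D^S_M` and `c = C_α D^S_M / M² > 0`. Spheres are Lebesgue-null, so `b` is continuous,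
tends to `0` at infinity, and the mass inside radius `r` is `M - b(r)`; the splitting estimate
becomes `(c (M - b(r)) - C_M/√r) b(r) ≤ ε`. For `R > R_M` the number `δ = cM/2 - C_M/√R` is
positive. If `ε < δ M/2`, then `b` cannot take the value `M/2` on `[R, ∞)`, so by the intermediate
value theorem `b(R) ≤ M/2`, and then `δ b(R) ≤ ε`. Along a minimizing sequence `ε → 0`.
-/

open MeasureTheory

local notation "E2" => EuclideanSpace ℝ (Fin 2)

/-- Kinetic energy plus Casimir functional. -/
noncomputable def Pfunc (Q : ℝ → ℝ) (f : E2 × E2 → ℝ) : ℝ :=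
  (1/2) * (∫ p : E2 × E2, ‖p.2‖^2 * f p) + ∫ p : E2 × E2, Q (f p)

/-- Potential energy of a flat density. -/
noncomputable def EpotF (f : E2 × E2 → ℝ) : ℝ :=
  -(1/2) * ∫ x : E2, ∫ y : E2, (∫ v : E2, f (x, v)) * (∫ w : E2, f (y, w)) / ‖x - y‖

/-- Energy-Casimir functional. -/
noncomputable def Dfunc (Q : ℝ → ℝ) (f : E2 × E2 → ℝ) : ℝ := Pfunc Q f + EpotF f

/-- Axial symmetry: invariance under simultaneous rotation of `x` and `v`. -/
def AxialSym (f : E2 × E2 → ℝ) : Prop :=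
  ∀ A : Matrix (Fin 2) (Fin 2) ℝ, A ∈ Matrix.specialOrthogonalGroup (Fin 2) ℝ →
    ∀ x v : E2, f (WithLp.toLp 2 (A.mulVec x), WithLp.toLp 2 (A.mulVec v)) = f (x, v)

/-- The axially symmetric constraint set `F^S_M`. -/
def FMSset (Q : ℝ → ℝ) (M : ℝ) : Set (E2 × E2 → ℝ) :=
  {f | Measurable f ∧ (∀ p, 0 ≤ f p) ∧ Integrable f ∧ (∫ p, f p) = M ∧
    Integrable (fun p : E2 × E2 => ‖p.2‖^2 * f p) ∧
    Integrable (fun p : E2 × E2 => Q (f p)) ∧ AxialSym f}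

open Filter Topology Set

theorem le_div_of_splitting_bound {b : ℝ → ℝ} {c a M ε R : ℝ} (hb : ContinuousOn b (Ici R))
    (hb0 : ∀ r, 0 ≤ b r) (hbtop : Tendsto b atTop (𝓝 0)) (hc : 0 ≤ c) (hM : 0 < M)
    (hδ : 0 < c * M / 2 - a) (hε : ε < (c * M / 2 - a) * (M / 2))
    (hsplit : ∀ r, R ≤ r → (c * (M - b r) - a) * b r ≤ ε) :
    b R ≤ ε / (c * M / 2 - a) := by
  have hhalf : b R ≤ M / 2 := by
    by_contra! hbR
    obtain ⟨r₁, hsmall, hr₁⟩ :=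
      ((hbtop.eventually (gt_mem_nhds (half_pos hM))).and (eventually_ge_atTop R)).exists
    obtain ⟨r, hr, hbr⟩ := intermediate_value_Icc' hr₁ (hb.mono Icc_subset_Ici_self)
      ⟨hsmall.le, hbR.le⟩
    have := hsplit r hr.1
    rw [hbr] at this
    nlinarith
  rw [le_div_iff₀ hδ]
  nlinarith [hsplit R le_rfl, mul_nonneg (mul_nonneg hc (sub_nonneg.2 hhalf)) (hb0 R)]

section TailMass

variable {E : Type*} [NormedAddCommGroup E] [MeasurableSpace E] [BorelSpace E]
  {μ : Measure E} {g : E → ℝ}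

theorem measurableSet_lt_norm (r : ℝ) : MeasurableSet {x : E | r < ‖x‖} :=
  measurableSet_lt measurable_const measurable_norm

theorem setIntegral_le_norm_eq_setIntegral_lt_norm [NormedSpace ℝ E] [FiniteDimensional ℝ E]
    [Nontrivial E] [μ.IsAddHaarMeasure] (r : ℝ) :
    ∫ x in {x : E | r ≤ ‖x‖}, g x ∂μ = ∫ x in {x : E | r < ‖x‖}, g x ∂μ := by
  have hunion : {x : E | r ≤ ‖x‖} = {x | r < ‖x‖} ∪ Metric.sphere 0 r := by
    ext x
    simp [le_iff_lt_or_eq, eq_comm]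
  rw [hunion]
  exact setIntegral_congr_set
    (union_ae_eq_left_of_ae_eq_empty (ae_eq_empty.2 (Measure.addHaar_sphere μ 0 r)))

theorem setIntegral_norm_lt_add_setIntegral_lt_norm [NormedSpace ℝ E] [FiniteDimensional ℝ E]
    [Nontrivial E] [μ.IsAddHaarMeasure] (hg : Integrable g μ) (r : ℝ) :
    (∫ x in {x : E | ‖x‖ < r}, g x ∂μ) + ∫ x in {x : E | r < ‖x‖}, g x ∂μ = ∫ x, g x ∂μ := by
  have hcompl : {x : E | ‖x‖ < r}ᶜ = {x | r ≤ ‖x‖} := by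
    ext x
    simp
  rw [← integral_add_compl (measurableSet_lt measurable_norm measurable_const) hg, hcompl,
    setIntegral_le_norm_eq_setIntegral_lt_norm]

theorem continuous_setIntegral_lt_norm [NormedSpace ℝ E] [FiniteDimensional ℝ E]
    [Nontrivial E] [μ.IsAddHaarMeasure] (hg : Integrable g μ) :
    Continuous fun r : ℝ => ∫ x in {x : E | r < ‖x‖}, g x ∂μ := by
  simp_rw [← integral_indicator (measurableSet_lt_norm _)]
  refine continuous_iff_continuousAt.2 fun r₀ => continuousAt_of_dominated (bound := (‖g ·‖))
    (.of_forall fun r => (hg.indicator (measurableSet_lt_norm r)).aestronglyMeasurable)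
    (.of_forall fun r => ae_of_all _ fun x => norm_indicator_le_norm_self _ _) hg.norm ?_
  -- off the null sphere `‖x‖ = r₀`, the integrand is locally constant in `r` near `r₀`
  filter_upwards [measure_eq_zero_iff_ae_notMem.1 (Measure.addHaar_sphere μ 0 r₀)] with x hx
  rcases (show ‖x‖ ≠ r₀ by simpa using hx).lt_or_gt with hlt | hgt
  · exact continuousAt_const.congr_of_eventuallyEq <| (eventually_gt_nhds hlt).mono
      fun r hr => indicator_of_notMem (s := {x : E | r < ‖x‖}) (not_lt.2 hr.le) g
  · exact continuousAt_const.congr_of_eventuallyEq <| (eventually_lt_nhds hgt).mono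
      fun r hr => indicator_of_mem (s := {x : E | r < ‖x‖}) hr g

theorem tendsto_setIntegral_lt_norm_atTop (hg : Integrable g μ) :
    Tendsto (fun r : ℝ => ∫ x in {x : E | r < ‖x‖}, g x ∂μ) atTop (𝓝 0) := by
  simp_rw [← integral_indicator (measurableSet_lt_norm _)]
  have := tendsto_integral_filter_of_dominated_convergence (μ := μ) (l := atTop) (f := fun _ => 0)
    (F := fun r : ℝ => {x : E | r < ‖x‖}.indicator g) (‖g ·‖)
    (.of_forall fun r => (hg.indicator (measurableSet_lt_norm r)).aestronglyMeasurable)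
    (.of_forall fun r => ae_of_all _ fun x => norm_indicator_le_norm_self _ _) hg.norm
    (ae_of_all _ fun x => tendsto_const_nhds.congr' <| (eventually_ge_atTop ‖x‖).mono
      fun r hr => (indicator_of_notMem (s := {x : E | r < ‖x‖}) (not_lt.2 hr) g).symm)
  simpa using this

theorem setIntegral_le_norm_le_div_of_splitting [NormedSpace ℝ E] [FiniteDimensional ℝ E]
    [Nontrivial E] [μ.IsAddHaarMeasure] {c C M ε R : ℝ}
    (hg : Integrable g μ) (hg0 : ∀ x, 0 ≤ g x) (hgM : ∫ x, g x ∂μ = M) (hM : 0 < M)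
    (hc : 0 ≤ c) (hC : 0 ≤ C) (hR : 0 < R) (hδ : 0 < c * M / 2 - C / √R)
    (hε : ε < (c * M / 2 - C / √R) * (M / 2))
    (hsplit : ∀ r, 0 < r →
      (c * (∫ x in {x : E | ‖x‖ < r}, g x ∂μ) - C / √r) * (∫ x in {x : E | r < ‖x‖}, g x ∂μ) ≤ ε) :
    ∫ x in {x : E | R ≤ ‖x‖}, g x ∂μ ≤ ε / (c * M / 2 - C / √R) := by
  rw [setIntegral_le_norm_eq_setIntegral_lt_norm]
  refine le_div_of_splitting_bound (continuous_setIntegral_lt_norm hg).continuousOn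
    (fun r => setIntegral_nonneg (measurableSet_lt_norm r) fun x _ => hg0 x)
    (tendsto_setIntegral_lt_norm_atTop hg) hc hM hδ hε fun r hr => ?_
  have hinner : ∫ x in {x : E | ‖x‖ < r}, g x ∂μ = M - ∫ x in {x : E | r < ‖x‖}, g x ∂μ := by
    rw [← hgM, ← setIntegral_norm_lt_add_setIntegral_lt_norm hg r, add_sub_cancel_right]
  calc _ ≤ (c * (M - ∫ x in {x : E | r < ‖x‖}, g x ∂μ) - C / √r) *
        ∫ x in {x : E | r < ‖x‖}, g x ∂μ := by
        gcongr
        exact setIntegral_nonneg (measurableSet_lt_norm r) fun x _ => hg0 x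
    _ ≤ ε := hinner ▸ hsplit r (hR.trans_le hr)

end TailMass

theorem integrable_integral_of_mem_FMSset {Q : ℝ → ℝ} {M : ℝ} {f : E2 × E2 → ℝ}
    (hf : f ∈ FMSset Q M) : Integrable fun x : E2 => ∫ v : E2, f (x, v) :=
  (Measure.volume_eq_prod (α := E2) (β := E2) ▸ hf.2.2.1).integral_prod_left

theorem integral_integral_of_mem_FMSset {Q : ℝ → ℝ} {M : ℝ} {f : E2 × E2 → ℝ}
    (hf : f ∈ FMSset Q M) : ∫ x : E2, ∫ v : E2, f (x, v) = M := by
  rw [← integral_prod _ (Measure.volume_eq_prod (α := E2) (β := E2) ▸ hf.2.2.1),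
    ← Measure.volume_eq_prod]
  exact hf.2.2.2.1

theorem mass_concentration_general (Q : ℝ → ℝ) (M : ℝ)
    (hM : 0 < M)
    (DSM : ℝ) (hDSMneg : DSM < 0)
    (Cα CM : ℝ) (hCα : Cα < 0) (hCM : 0 < CM)
    (hsplit : ∀ f ∈ FMSset Q M, ∀ R : ℝ, 0 < R →
      Dfunc Q f - DSM ≥
        ((Cα * DSM / M^2) * (∫ x in {x : E2 | ‖x‖ < R}, ∫ v : E2, f (x, v))
            - CM / Real.sqrt R) *
          ∫ x in {x : E2 | R < ‖x‖}, ∫ v : E2, f (x, v))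
    (RM : ℝ) (hRM : RM = (2 * M * CM / (Cα * DSM))^2)
    (fseq : ℕ → (E2 × E2 → ℝ)) (hfseq : ∀ n, fseq n ∈ FMSset Q M)
    (hmin : Filter.Tendsto (fun n => Dfunc Q (fseq n)) Filter.atTop (nhds DSM)) :
    ∀ R : ℝ, RM < R →
      Filter.Tendsto
        (fun n => ∫ x in {x : E2 | R ≤ ‖x‖}, ∫ v : E2, fseq n (x, v))
        Filter.atTop (nhds 0) := by
  intro R hR
  have hCD : 0 < Cα * DSM := mul_pos_of_neg_of_neg hCα hDSMneg
  have hRM0 : 0 < RM := by rw [hRM]; positivity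
  have hedge : CM / √RM = Cα * DSM / M ^ 2 * M / 2 := by
    rw [hRM, Real.sqrt_sq (by positivity)]
    field_simp
  have hδ : 0 < Cα * DSM / M ^ 2 * M / 2 - CM / √R := by
    have := div_lt_div_of_pos_left hCM (Real.sqrt_pos.2 hRM0) (Real.sqrt_lt_sqrt hRM0.le hR)
    linarith
  have hρ0 : ∀ n x, 0 ≤ ∫ v : E2, fseq n (x, v) := fun n x =>
    integral_nonneg fun v => (hfseq n).2.1 (x, v)
  have hgap := tendsto_sub_nhds_zero_iff.2 hmin
  refine squeeze_zero'
    (.of_forall fun n => setIntegral_nonneg (measurableSet_le measurable_const measurable_norm)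
      fun x _ => hρ0 n x)
    ?_ (by simpa using hgap.div_const (Cα * DSM / M ^ 2 * M / 2 - CM / √R))
  filter_upwards [hgap.eventually (gt_mem_nhds (mul_pos hδ (half_pos hM)))] with n hn
  exact setIntegral_le_norm_le_div_of_splitting (integrable_integral_of_mem_FMSset (hfseq n))
    (hρ0 n) (integral_integral_of_mem_FMSset (hfseq n)) hM (by positivity) hCM.le
    (hRM0.trans hR) hδ hn (hsplit _ (hfseq n))

theorem mass_concentration (Q : ℝ → ℝ) (C₁ C₂ F₀ μ₁ μ₂ μ₃ M : ℝ)
    (hC₁ : 0 < C₁) (hC₂ : 0 < C₂) (hF₀ : 0 < F₀) (hM : 0 < M)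
    (hμ₁ : 0 < μ₁ ∧ μ₁ < 1) (hμ₂ : 0 < μ₂ ∧ μ₂ < 1) (hμ₃ : 0 < μ₃ ∧ μ₃ < 1)
    (hQ0 : ∀ f : ℝ, 0 ≤ f → 0 ≤ Q f)
    (hQ1 : ∀ f : ℝ, F₀ ≤ f → C₁ * f ^ ((1:ℝ) + 1/μ₁) ≤ Q f)
    (hQ2 : ∀ f : ℝ, 0 ≤ f → f ≤ F₀ → Q f ≤ C₂ * f ^ ((1:ℝ) + 1/μ₂))
    (hQ3 : ∀ f : ℝ, 0 ≤ f → ∀ lam : ℝ, 0 ≤ lam → lam ≤ 1 →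
      lam ^ ((1:ℝ) + 1/μ₃) * Q f ≤ Q (lam * f))
    (DSM : ℝ) (hDSM : DSM = sInf (Dfunc Q '' FMSset Q M)) (hDSMneg : DSM < 0)
    (Cα CM : ℝ) (hCα : Cα < 0) (hCM : 0 < CM)
    (hsplit : ∀ f ∈ FMSset Q M, ∀ R : ℝ, 0 < R →
      Dfunc Q f - DSM ≥
        ((Cα * DSM / M^2) * (∫ x in {x : E2 | ‖x‖ < R}, ∫ v : E2, f (x, v))
            - CM / Real.sqrt R) *
          ∫ x in {x : E2 | R < ‖x‖}, ∫ v : E2, f (x, v))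
    (RM : ℝ) (hRM : RM = (2 * M * CM / (Cα * DSM))^2)
    (fseq : ℕ → (E2 × E2 → ℝ)) (hfseq : ∀ n, fseq n ∈ FMSset Q M)
    (hmin : Filter.Tendsto (fun n => Dfunc Q (fseq n)) Filter.atTop (nhds DSM)) :
    ∀ R : ℝ, RM < R →
      Filter.Tendsto
        (fun n => ∫ x in {x : E2 | R ≤ ‖x‖}, ∫ v : E2, fseq n (x, v))
        Filter.atTop (nhds 0) :=
  mass_concentration_general Q M hM DSM hDSMneg Cα CM hCα hCM hsplit RM hRM fseq hfseq hmin
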